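/- (Summation formula (A.1)) Let 0 < q < 1, 0 < a < q^{-1} and b ∈ ℝ. Then the series below converges absolutely and Σ_{n=0}^{∞} [(abq;q)_n (bq;q)_n / ((aq;q)_n (q;q)_n)] · (1 − abq^{2n+1}) · a^n q^{n²} = (1 − abq) · (abq²;q)_∞ / (aq;q)_∞. -/

import Mathlib

open scoped BigOperators

/-- The q-shifted factorial `(a;q)_k`. -/
noncomputable def qPoch (q a : ℝ) (k : ℕ) : ℝ :=
  ∏ j ∈ Finset.range k, (1 - a * q ^ j)

/-- The infinite q-shifted factorial `(a;q)_∞`. -/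
noncomputable def qPochInf (q a : ℝ) : ℝ :=
  ∏' j : ℕ, (1 - a * q ^ j)

/-!
Replace `a` by a parameter `α` and write `Tₙ(α) = Bₙ(α) (1 - αbq²ⁿ⁺¹)` for the summand
(`vwpTerm`, `vwpCoeff`) and `S(α) = ∑ₙ Tₙ(α)`. For `0 ≤ α ≤ a` the terms are `O((aq)ⁿ)`
uniformly in `α`. The differences `(1 - αq) Tₙ(α) - (1 - αbq) Tₙ(αq)` telescope to `Vₙ - Vₙ₊₁`
with `Vₙ = (1 - αq)(1 - qⁿ) Bₙ(α)` and `V₀ = 0`, so `(1 - αq) S(α) = (1 - αbq) S(αq)`.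
Iterating, `(aq;q)ₖ S(a) = (abq;q)ₖ S(aqᵏ)`, and `S(aqᵏ) → S(0) = 1` by dominated convergence.
Letting `k → ∞` gives `(aq;q)_∞ S(a) = (abq;q)_∞ = (1 - abq)(abq²;q)_∞`.
-/

open Filter Topology

section QPochhammer

variable {q x y : ℝ}

lemma qPoch_succ (q x : ℝ) (n : ℕ) : qPoch q x (n + 1) = qPoch q x n * (1 - x * q ^ n) :=
  Finset.prod_range_succ _ n

lemma qPoch_succ' (q x : ℝ) (n : ℕ) : qPoch q x (n + 1) = (1 - x) * qPoch q (x * q) n := by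
  simp only [qPoch, Finset.prod_range_succ', pow_zero, mul_one, pow_succ, mul_assoc, mul_comm q]
  ring

@[fun_prop]
lemma continuous_qPoch (q : ℝ) (n : ℕ) : Continuous fun x ↦ qPoch q x n := by
  unfold qPoch
  fun_prop

lemma one_sub_mul_pow_pos (hq0 : 0 ≤ q) (hq1 : q ≤ 1) (hx : x < 1) (j : ℕ) :
    0 < 1 - x * q ^ j := by
  have := pow_nonneg hq0 j
  have := pow_le_one₀ hq0 hq1 (n := j)
  rcases le_or_gt x 0 with hx0 | hx0 <;> nlinarith

lemma qPoch_pos (hq0 : 0 ≤ q) (hq1 : q ≤ 1) (hx : x < 1) (n : ℕ) : 0 < qPoch q x n :=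
  Finset.prod_pos fun j _ ↦ one_sub_mul_pow_pos hq0 hq1 hx j

lemma qPoch_le_qPoch (hq0 : 0 ≤ q) (hq1 : q ≤ 1) (hxy : x ≤ y) (hy : y < 1) (n : ℕ) :
    qPoch q y n ≤ qPoch q x n :=
  Finset.prod_le_prod (fun j _ ↦ (one_sub_mul_pow_pos hq0 hq1 hy j).le) fun j _ ↦
    by nlinarith [pow_nonneg hq0 j]

lemma multipliable_one_sub_mul_pow (hq0 : 0 ≤ q) (hq1 : q < 1) (x : ℝ) :
    Multipliable fun j : ℕ ↦ 1 - x * q ^ j := by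
  simpa [sub_eq_add_neg] using
    Real.multipliable_one_add_of_summable ((summable_geometric_of_lt_one hq0 hq1).mul_left (-x))

lemma tendsto_qPoch (hq0 : 0 ≤ q) (hq1 : q < 1) (x : ℝ) :
    Tendsto (qPoch q x) atTop (𝓝 (qPochInf q x)) :=
  (multipliable_one_sub_mul_pow hq0 hq1 x).hasProd.tendsto_prod_nat

lemma qPochInf_pos (hq0 : 0 ≤ q) (hq1 : q < 1) (hx : x < 1) : 0 < qPochInf q x := by
  have hlog : Summable fun j : ℕ ↦ Real.log (1 - x * q ^ j) := by
    simpa [sub_eq_add_neg] using Real.summable_log_one_add_of_summable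
      ((summable_geometric_of_lt_one hq0 hq1).mul_left (-x))
  rw [qPochInf, ← Real.rexp_tsum_eq_tprod (one_sub_mul_pow_pos hq0 hq1.le hx) hlog]
  exact Real.exp_pos _

lemma qPochInf_eq_one_sub_mul (hq0 : 0 ≤ q) (hq1 : q < 1) (x : ℝ) :
    qPochInf q x = (1 - x) * qPochInf q (x * q) := by
  have hshift : Multipliable fun j : ℕ ↦ 1 - x * q ^ (j + 1) := by
    simpa only [mul_assoc, ← pow_succ'] using multipliable_one_sub_mul_pow hq0 hq1 (x * q)
  rw [qPochInf, tprod_eq_zero_mul' (f := fun j ↦ 1 - x * q ^ j) hshift, pow_zero, mul_one,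
    qPochInf]
  simp only [mul_assoc, ← pow_succ']

lemma qPochInf_le_qPoch (hq0 : 0 ≤ q) (hq1 : q < 1) (hx0 : 0 ≤ x) (hx1 : x < 1) (n : ℕ) :
    qPochInf q x ≤ qPoch q x n := by
  refine Antitone.le_of_tendsto (antitone_nat_of_succ_le fun k ↦ ?_) (tendsto_qPoch hq0 hq1 x) n
  rw [qPoch_succ]
  have := qPoch_pos hq0 hq1.le hx1 k
  nlinarith [mul_nonneg hx0 (pow_nonneg hq0 k)]

lemma qPoch_le_qPochInf (hq0 : 0 ≤ q) (hq1 : q < 1) (hx : x ≤ 0) (n : ℕ) :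
    qPoch q x n ≤ qPochInf q x := by
  refine Monotone.ge_of_tendsto (monotone_nat_of_le_succ fun k ↦ ?_) (tendsto_qPoch hq0 hq1 x) n
  rw [qPoch_succ]
  have := qPoch_pos hq0 hq1.le (hx.trans_lt one_pos) k
  nlinarith [mul_nonpos_of_nonpos_of_nonneg hx (pow_nonneg hq0 k)]

lemma abs_qPoch_le_qPochInf (hq0 : 0 ≤ q) (hq1 : q < 1) (hxy : |x| ≤ y) (n : ℕ) :
    |qPoch q x n| ≤ qPochInf q (-y) := by
  have hy : 0 ≤ y := (abs_nonneg x).trans hxy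
  calc |qPoch q x n| = ∏ j ∈ Finset.range n, |1 - x * q ^ j| := Finset.abs_prod _ _
    _ ≤ qPoch q (-y) n := Finset.prod_le_prod (fun j _ ↦ abs_nonneg _) fun j _ ↦ by
        have := abs_sub (1 : ℝ) (x * q ^ j)
        rw [abs_one, abs_mul, abs_of_nonneg (pow_nonneg hq0 j)] at this
        nlinarith [pow_nonneg hq0 j]
    _ ≤ qPochInf q (-y) := qPoch_le_qPochInf hq0 hq1 (neg_nonpos.mpr hy) n

lemma qPochInf_le_qPoch_of_le (hq0 : 0 ≤ q) (hq1 : q < 1) (hx : 0 ≤ x) (hxy : x ≤ y)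
    (hy : y < 1) (n : ℕ) : qPochInf q y ≤ qPoch q x n :=
  (qPochInf_le_qPoch hq0 hq1 (hx.trans hxy) hy n).trans (qPoch_le_qPoch hq0 hq1.le hxy hy n)

end QPochhammer

lemma hasSum_sub_succ {G : Type*} [AddCommGroup G] [TopologicalSpace G] [IsTopologicalAddGroup G]
    [T2Space G] {V : ℕ → G} (hV : Tendsto V atTop (𝓝 0))
    (hs : Summable fun n ↦ V n - V (n + 1)) : HasSum (fun n ↦ V n - V (n + 1)) (V 0) := by
  refine (Summable.hasSum_iff_tendsto_nat hs).mpr ?_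
  simp_rw [Finset.sum_range_sub']
  simpa using (tendsto_const_nhds (x := V 0)).sub hV

section VeryWellPoisedSeries

variable {q a α : ℝ}

noncomputable def vwpCoeff (q b α : ℝ) (n : ℕ) : ℝ :=
  qPoch q (α * b * q) n * qPoch q (b * q) n / (qPoch q (α * q) n * qPoch q q n) *
    α ^ n * q ^ (n ^ 2)

noncomputable def vwpTerm (q b α : ℝ) (n : ℕ) : ℝ :=
  qPoch q (α * b * q) n * qPoch q (b * q) n / (qPoch q (α * q) n * qPoch q q n) *
    (1 - α * b * q ^ (2 * n + 1)) * α ^ n * q ^ (n ^ 2)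

lemma vwpTerm_eq (q b α : ℝ) (n : ℕ) :
    vwpTerm q b α n = vwpCoeff q b α n * (1 - α * b * q ^ (2 * n + 1)) := by
  rw [vwpTerm, vwpCoeff]
  ring

lemma exists_abs_vwpCoeff_le (hq0 : 0 < q) (hq1 : q < 1) (haq : a * q < 1) (b : ℝ) :
    ∃ K, ∀ α ∈ Set.Icc 0 a, ∀ n, |vwpCoeff q b α n| ≤ K * (a * q) ^ n := by
  refine ⟨qPochInf q (-(a * |b| * q)) * qPochInf q (-(|b| * q)) /
    (qPochInf q (a * q) * qPochInf q q), fun α ⟨hα0, hαa⟩ n ↦ ?_⟩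
  have ha0 : 0 ≤ a := hα0.trans hαa
  have hαq : α * q ≤ a * q := by nlinarith
  have hnum : |qPoch q (α * b * q) n * qPoch q (b * q) n| ≤
      qPochInf q (-(a * |b| * q)) * qPochInf q (-(|b| * q)) := by
    rw [abs_mul]
    refine mul_le_mul (abs_qPoch_le_qPochInf hq0.le hq1 ?_ n)
      (abs_qPoch_le_qPochInf hq0.le hq1 ?_ n) (abs_nonneg _)
      (qPochInf_pos hq0.le hq1 (by nlinarith [mul_nonneg ha0 (abs_nonneg b)])).le
    · rw [abs_mul, abs_mul, abs_of_nonneg hα0, abs_of_pos hq0]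
      gcongr
    · rw [abs_mul, abs_of_pos hq0]
  have hden : qPochInf q (a * q) * qPochInf q q ≤ qPoch q (α * q) n * qPoch q q n :=
    mul_le_mul (qPochInf_le_qPoch_of_le hq0.le hq1 (by positivity) hαq haq n)
      (qPochInf_le_qPoch hq0.le hq1 hq0.le hq1 n) (qPochInf_pos hq0.le hq1 hq1).le
      (qPoch_pos hq0.le hq1.le (hαq.trans_lt haq) n).le
  have hpow : α ^ n * q ^ (n ^ 2) ≤ (a * q) ^ n := by
    rw [mul_pow]
    exact mul_le_mul (pow_le_pow_left₀ hα0 hαa n)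
      (pow_le_pow_of_le_one hq0.le hq1.le (Nat.le_self_pow two_ne_zero n))
      (by positivity) (pow_nonneg ha0 n)
  have hden_pos : 0 < qPochInf q (a * q) * qPochInf q q :=
    mul_pos (qPochInf_pos hq0.le hq1 haq) (qPochInf_pos hq0.le hq1 hq1)
  rw [vwpCoeff, mul_assoc, abs_mul, abs_div, abs_of_pos (hden_pos.trans_le hden),
    abs_of_nonneg (mul_nonneg (pow_nonneg hα0 n) (pow_nonneg hq0.le _))]
  exact mul_le_mul (div_le_div₀ ((abs_nonneg _).trans hnum) hnum hden_pos hden) hpow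
    (by positivity) (div_nonneg ((abs_nonneg _).trans hnum) hden_pos.le)

lemma exists_abs_vwpTerm_le (hq0 : 0 < q) (hq1 : q < 1) (haq : a * q < 1) (b : ℝ) :
    ∃ K, ∀ α ∈ Set.Icc 0 a, ∀ n, |vwpTerm q b α n| ≤ K * (a * q) ^ n := by
  obtain ⟨K, hK⟩ := exists_abs_vwpCoeff_le hq0 hq1 haq b
  refine ⟨K * (1 + a * |b|), fun α hα n ↦ ?_⟩
  have hfactor : |1 - α * b * q ^ (2 * n + 1)| ≤ 1 + a * |b| := by
    have := abs_sub (1 : ℝ) (α * b * q ^ (2 * n + 1))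
    rw [abs_one, abs_mul, abs_mul, abs_of_nonneg hα.1, abs_of_nonneg (pow_nonneg hq0.le _)]
      at this
    have := mul_le_of_le_one_right (mul_nonneg hα.1 (abs_nonneg b))
      (pow_le_one₀ hq0.le hq1.le (n := 2 * n + 1))
    nlinarith [mul_le_mul_of_nonneg_right hα.2 (abs_nonneg b)]
  rw [vwpTerm_eq, abs_mul]
  calc |vwpCoeff q b α n| * |1 - α * b * q ^ (2 * n + 1)|
      ≤ K * (a * q) ^ n * (1 + a * |b|) :=
        mul_le_mul (hK α hα n) hfactor (abs_nonneg _) ((abs_nonneg _).trans (hK α hα n))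
    _ = K * (1 + a * |b|) * (a * q) ^ n := by ring

lemma summable_abs_vwpTerm (hq0 : 0 < q) (hq1 : q < 1) (hα0 : 0 ≤ α) (hαq : α * q < 1)
    (b : ℝ) : Summable fun n ↦ |vwpTerm q b α n| := by
  obtain ⟨K, hK⟩ := exists_abs_vwpTerm_le hq0 hq1 hαq b
  exact Summable.of_nonneg_of_le (fun n ↦ abs_nonneg _) (hK α ⟨hα0, le_rfl⟩)
    ((summable_geometric_of_lt_one (by positivity) hαq).mul_left K)

lemma tendsto_vwpCoeff_atTop (hq0 : 0 < q) (hq1 : q < 1) (hα0 : 0 ≤ α) (hαq : α * q < 1)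
    (b : ℝ) : Tendsto (vwpCoeff q b α) atTop (𝓝 0) := by
  obtain ⟨K, hK⟩ := exists_abs_vwpCoeff_le hq0 hq1 hαq b
  refine squeeze_zero_norm (hK α ⟨hα0, le_rfl⟩) ?_
  simpa using (tendsto_pow_atTop_nhds_zero_of_lt_one (by positivity) hαq).const_mul K

lemma continuousAt_vwpTerm_zero (hq0 : 0 ≤ q) (hq1 : q < 1) (b : ℝ) (n : ℕ) :
    ContinuousAt (fun α ↦ vwpTerm q b α n) 0 := by
  have hden : qPoch q (0 * q) n * qPoch q q n ≠ 0 :=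
    (mul_pos (qPoch_pos hq0 hq1.le (by simp) n) (qPoch_pos hq0 hq1.le hq1 n)).ne'
  unfold vwpTerm
  fun_prop (disch := exact hden)

lemma tsum_vwpTerm_zero (q b : ℝ) : ∑' n, vwpTerm q b 0 n = 1 := by
  rw [tsum_eq_single 0 fun n hn ↦ by simp [vwpTerm, zero_pow hn]]
  simp [vwpTerm, qPoch]

lemma vwpCoeff_succ (hq0 : 0 ≤ q) (hq1 : q < 1) (hαq : α * q < 1) (b : ℝ) (n : ℕ) :
    (1 - α * q ^ (n + 1)) * (1 - q ^ (n + 1)) * vwpCoeff q b α (n + 1) =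
      α * q ^ (2 * n + 1) * (1 - α * b * q ^ (n + 1)) * (1 - b * q ^ (n + 1)) *
        vwpCoeff q b α n := by
  have hA := (qPoch_pos hq0 hq1.le hαq n).ne'
  have hQ := (qPoch_pos hq0 hq1.le hq1 n).ne'
  have hA' := (one_sub_mul_pow_pos hq0 hq1.le hαq n).ne'
  have hQ' := (one_sub_mul_pow_pos hq0 hq1.le hq1 n).ne'
  rw [vwpCoeff, vwpCoeff, qPoch_succ, qPoch_succ, qPoch_succ, qPoch_succ]
  field_simp
  ring

lemma vwpCoeff_mul_q (hq0 : 0 ≤ q) (hq1 : q < 1) (hαq : α * q < 1) (b : ℝ) (n : ℕ) :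
    (1 - α * b * q) * (1 - α * q ^ (n + 1)) * vwpCoeff q b (α * q) n =
      (1 - α * q) * q ^ n * (1 - α * b * q ^ (n + 1)) * vwpCoeff q b α n := by
  have hP : (1 - α * b * q) * qPoch q (α * q * b * q) n =
      qPoch q (α * b * q) n * (1 - α * b * q * q ^ n) := by
    rw [show α * q * b * q = α * b * q * q by ring, ← qPoch_succ', qPoch_succ]
  have hA : (1 - α * q) * qPoch q (α * q * q) n = qPoch q (α * q) n * (1 - α * q * q ^ n) := by
    rw [← qPoch_succ', qPoch_succ]
  have hαq' : 1 - α * q ≠ 0 := (sub_pos.mpr hαq).ne'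
  have hA0 := (qPoch_pos hq0 hq1.le hαq n).ne'
  have hQ0 := (qPoch_pos hq0 hq1.le hq1 n).ne'
  have hA1 := (one_sub_mul_pow_pos hq0 hq1.le hαq n).ne'
  have hY : qPoch q (α * q * q) n = qPoch q (α * q) n * (1 - α * q * q ^ n) / (1 - α * q) :=
    eq_div_of_mul_eq hαq' (by rw [mul_comm, hA])
  calc (1 - α * b * q) * (1 - α * q ^ (n + 1)) * vwpCoeff q b (α * q) n
      = (1 - α * b * q) * qPoch q (α * q * b * q) n * ((1 - α * q ^ (n + 1)) *
          qPoch q (b * q) n / (qPoch q (α * q * q) n * qPoch q q n) * (α * q) ^ n *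
            q ^ (n ^ 2)) := by
        rw [vwpCoeff]
        ring
    _ = (1 - α * q) * q ^ n * (1 - α * b * q ^ (n + 1)) * vwpCoeff q b α n := by
        rw [hP, hY, vwpCoeff]
        field_simp
        ring

lemma vwpTerm_sub_vwpTerm_mul_q (hq0 : 0 ≤ q) (hq1 : q < 1) (hαq : α * q < 1) (b : ℝ)
    (n : ℕ) :
    (1 - α * q) * vwpTerm q b α n - (1 - α * b * q) * vwpTerm q b (α * q) n =
      (1 - α * q) * (1 - q ^ n) * vwpCoeff q b α n -
        (1 - α * q) * (1 - q ^ (n + 1)) * vwpCoeff q b α (n + 1) := by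
  refine mul_left_cancel₀ (one_sub_mul_pow_pos hq0 hq1.le hαq n).ne' ?_
  rw [vwpTerm_eq, vwpTerm_eq]
  linear_combination (-(1 - α * q * b * q ^ (2 * n + 1))) * vwpCoeff_mul_q hq0 hq1 hαq b n +
    (1 - α * q) * vwpCoeff_succ hq0 hq1 hαq b n

lemma one_sub_mul_tsum_vwpTerm (hq0 : 0 < q) (hq1 : q < 1) (hα0 : 0 ≤ α) (hαq : α * q < 1)
    (b : ℝ) :
    (1 - α * q) * ∑' n, vwpTerm q b α n = (1 - α * b * q) * ∑' n, vwpTerm q b (α * q) n := by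
  have hαq' : α * q * q < 1 := by nlinarith
  have hdiff := ((summable_abs_vwpTerm hq0 hq1 hα0 hαq b).of_abs.hasSum.mul_left (1 - α * q)).sub
    ((summable_abs_vwpTerm hq0 hq1 (by positivity) hαq' b).of_abs.hasSum.mul_left
      (1 - α * b * q))
  simp_rw [vwpTerm_sub_vwpTerm_mul_q hq0.le hq1 hαq b] at hdiff
  have hV : Tendsto (fun n ↦ (1 - α * q) * (1 - q ^ n) * vwpCoeff q b α n) atTop (𝓝 0) := by
    simpa using ((tendsto_pow_atTop_nhds_zero_of_lt_one hq0.le hq1).const_sub 1 |>.const_mul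
      (1 - α * q)).mul (tendsto_vwpCoeff_atTop hq0 hq1 hα0 hαq b)
  have := hdiff.unique (hasSum_sub_succ hV hdiff.summable)
  simp only [pow_zero, sub_self, mul_zero, zero_mul] at this
  exact sub_eq_zero.mp this

lemma qPoch_mul_tsum_vwpTerm (hq0 : 0 < q) (hq1 : q < 1) (ha0 : 0 ≤ a) (haq : a * q < 1)
    (b : ℝ) (k : ℕ) :
    qPoch q (a * q) k * ∑' n, vwpTerm q b a n =
      qPoch q (a * b * q) k * ∑' n, vwpTerm q b (a * q ^ k) n := by
  induction k with
  | zero => simp [qPoch]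
  | succ k ih =>
    have hk : a * q ^ k * q < 1 := lt_of_le_of_lt (mul_le_mul_of_nonneg_right
      (mul_le_of_le_one_right ha0 (pow_le_one₀ hq0.le hq1.le)) hq0.le) haq
    have hstep := one_sub_mul_tsum_vwpTerm hq0 hq1 (by positivity) hk b
    rw [mul_assoc, ← pow_succ] at hstep
    rw [qPoch_succ, qPoch_succ]
    linear_combination (1 - a * q * q ^ k) * ih + qPoch q (a * b * q) k * hstep

lemma tendsto_tsum_vwpTerm_mul_pow (hq0 : 0 < q) (hq1 : q < 1) (ha0 : 0 ≤ a) (haq : a * q < 1)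
    (b : ℝ) : Tendsto (fun k : ℕ ↦ ∑' n, vwpTerm q b (a * q ^ k) n) atTop (𝓝 1) := by
  obtain ⟨K, hK⟩ := exists_abs_vwpTerm_le hq0 hq1 haq b
  have hα : Tendsto (fun k : ℕ ↦ a * q ^ k) atTop (𝓝 0) := by
    simpa using (tendsto_pow_atTop_nhds_zero_of_lt_one hq0.le hq1).const_mul a
  rw [← tsum_vwpTerm_zero q b]
  refine tendsto_tsum_of_dominated_convergence
    ((summable_geometric_of_lt_one (by positivity) haq).mul_left K)
    (fun n ↦ (continuousAt_vwpTerm_zero hq0.le hq1 b n).tendsto.comp hα)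
    (Eventually.of_forall fun k n ↦ hK _ ⟨by positivity, ?_⟩ n)
  exact mul_le_of_le_one_right ha0 (pow_le_one₀ hq0.le hq1.le)

end VeryWellPoisedSeries

theorem summation_formula_A1
    (q a b : ℝ) (hq0 : 0 < q) (hq1 : q < 1)
    (ha0 : 0 < a) (ha1 : a < q⁻¹) :
    Summable (fun n : ℕ =>
      |qPoch q (a * b * q) n * qPoch q (b * q) n /
          (qPoch q (a * q) n * qPoch q q n) *
        (1 - a * b * q ^ (2 * n + 1)) * a ^ n * q ^ (n ^ 2)|) ∧
    ∑' n : ℕ,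
        qPoch q (a * b * q) n * qPoch q (b * q) n /
            (qPoch q (a * q) n * qPoch q q n) *
          (1 - a * b * q ^ (2 * n + 1)) * a ^ n * q ^ (n ^ 2) =
      (1 - a * b * q) * qPochInf q (a * b * q ^ 2) / qPochInf q (a * q) := by
  have haq : a * q < 1 := (lt_inv_mul_iff₀' hq0).mp (by rwa [mul_one])
  refine ⟨summable_abs_vwpTerm hq0 hq1 ha0.le haq b, ?_⟩
  change ∑' n, vwpTerm q b a n = _
  have hlim := (tendsto_qPoch hq0.le hq1 (a * q)).mul_const (∑' n, vwpTerm q b a n)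
  simp_rw [qPoch_mul_tsum_vwpTerm hq0 hq1 ha0.le haq b] at hlim
  have hprod := tendsto_nhds_unique hlim ((tendsto_qPoch hq0.le hq1 (a * b * q)).mul
    (tendsto_tsum_vwpTerm_mul_pow hq0 hq1 ha0.le haq b))
  rw [mul_one, qPochInf_eq_one_sub_mul hq0.le hq1 (a * b * q),
    show a * b * q * q = a * b * q ^ 2 by ring] at hprod
  rw [eq_div_iff (qPochInf_pos hq0.le hq1 haq).ne']
  linear_combination hprod
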